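/- Let K ≥ 2 be an integer. Define the (K-1)×(K-1) matrix A by A_{r,s} = C(2K-2s, 2r-1) + C(2K-2s, 2K-2r), and the matrix P by P_{s,r} = (2/(2s-1)) · ∑_{n=0}^{2K-2s} C(2r-1, 2K-2s-n+1) · C(n+2s-2, n) · B_n, for 1 ≤ r, s ≤ K-1. Then P·A equals the identity matrix; in particular A is invertible with A^{-1} = P. -/

import Mathlib

/-!
Write `φ_w(a, c) = ∑_{n ≤ c} C(n + w, n) B_n C(a, c - n)`, the coefficient of `x^c` in
`(1 + x)^a ∑_n C(n + w, n) B_n x^n`. With `K = s + u + 1 = t + v + 1` (0-based `s, t`), row `s`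
of `P` is `2 / (2s + 1) · φ_{2s}(2r + 1, 2u + 1)`, so `(P A)_{st}` is a sum of
`φ(2r + 1) (C(2v, 2r + 1) + C(2v, 2K - 2 - 2r))` with `φ = φ_{2s}(·, 2u + 1)`.

Pascal's rule and `∑_{k ≤ c} C(c, k) B_k = (-1)^c B_c` give the reflection
`φ_w(a, c) = (-1)^c φ_w(b, c)` for `a + b = w + c`. The first column term collects the odd `k`
of `∑_k C(2v, k) φ(k)`, and the reflection turns the second one into minus its even `k`, so the
entry is `-∑_k (-1)^k C(2v, k) φ(k)`. Since `∑_k (-1)^k C(m, k) (1 + x)^k = (-x)^m`, this is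
`-C(2u + 1 - 2v + 2s, 2u + 1 - 2v) B_{2u + 1 - 2v}` (or `0` if `v > u`), which vanishes unless
`u = v`, where `B_1 = -1/2` gives `(2s + 1) / 2`.
-/

open Finset

def bernoulliWeighted (w n : ℕ) : ℚ := (n + w).choose n * bernoulli n

def bernoulliConv (w a c : ℕ) : ℚ :=
  ∑ n ∈ range (c + 1), bernoulliWeighted w n * a.choose (c - n)

theorem sum_range_succ_choose_mul_bernoulli (c : ℕ) :
    ∑ k ∈ range (c + 1), (c.choose k : ℚ) * bernoulli k = bernoulli' c := by
  rw [sum_range_succ, sum_bernoulli, Nat.choose_self, Nat.cast_one, one_mul]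
  rcases eq_or_ne c 1 with rfl | hc
  · norm_num [bernoulli'_one]
  · rw [if_neg hc, zero_add, bernoulli_eq_bernoulli'_of_ne_one hc]

theorem Nat.choose_add_mul_choose_sub {w c n : ℕ} (h : n ≤ c) :
    (n + w).choose n * (w + c).choose (c - n) = (w + c).choose c * c.choose n := by
  rw [Nat.choose_mul h, Nat.choose_symm_of_eq_add (show w + c = (c - n) + (w + n) by omega),
    Nat.add_comm n w, mul_comm, Nat.choose_mul (Nat.le_add_left n w), Nat.add_sub_cancel,
    Nat.choose_symm_of_eq_add (show w + c - n = (c - n) + w by omega)]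

theorem bernoulliWeighted_two_mul_add_one (w m : ℕ) :
    bernoulliWeighted w (2 * m + 1) = if m = 0 then -((w : ℚ) + 1) / 2 else 0 := by
  rcases eq_or_ne m 0 with rfl | hm
  · simp [bernoulliWeighted]
    ring
  · rw [if_neg hm, bernoulliWeighted, bernoulli_eq_zero_of_odd (odd_two_mul_add_one m) (by omega),
      mul_zero]

namespace bernoulliConv

theorem zero_right (w a : ℕ) : bernoulliConv w a 0 = 1 := by
  simp [bernoulliConv, bernoulliWeighted]

theorem zero_left (w c : ℕ) : bernoulliConv w 0 c = bernoulliWeighted w c := by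
  rw [bernoulliConv, sum_eq_single_of_mem c (self_mem_range_succ c) fun n hn hnc => ?_]
  · simp
  · rw [Nat.choose_eq_zero_of_lt (by grind), Nat.cast_zero, mul_zero]

theorem add_self (w c : ℕ) : bernoulliConv w (w + c) c = (w + c).choose c * bernoulli' c := by
  rw [← sum_range_succ_choose_mul_bernoulli, mul_sum, bernoulliConv]
  refine sum_congr rfl fun n hn => ?_
  have := Nat.choose_add_mul_choose_sub (w := w) (Nat.lt_succ_iff.mp (mem_range.mp hn))
  rw [bernoulliWeighted, mul_right_comm, ← Nat.cast_mul, this]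
  push_cast
  ring

theorem succ_succ (w a c : ℕ) :
    bernoulliConv w (a + 1) (c + 1) = bernoulliConv w a (c + 1) + bernoulliConv w a c := by
  simp only [bernoulliConv, sum_range_succ _ (c + 1), Nat.sub_self, Nat.choose_zero_right]
  have : ∀ n ∈ range (c + 1), bernoulliWeighted w n * ((a + 1).choose (c + 1 - n) : ℚ) =
      bernoulliWeighted w n * a.choose (c + 1 - n) + bernoulliWeighted w n * a.choose (c - n) := by
    intro n hn
    rw [Nat.sub_add_comm (Nat.lt_succ_iff.mp (mem_range.mp hn)), Nat.choose_succ_succ']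
    push_cast
    ring
  rw [sum_congr rfl this, sum_add_distrib]
  ring

theorem eq_neg_one_pow_mul {w a b c : ℕ} (h : a + b = w + c) :
    bernoulliConv w a c = (-1) ^ c * bernoulliConv w b c := by
  induction a generalizing b c with
  | zero =>
    rw [zero_left, show b = w + c by omega, add_self, bernoulli'_eq_bernoulli, bernoulliWeighted,
      add_comm c w, mul_left_comm, ← mul_assoc ((-1 : ℚ) ^ c), ← pow_add,
      Even.neg_one_pow ⟨c, rfl⟩, one_mul]
  | succ a ih =>
    cases c with
    | zero => simp [zero_right]
    | succ c =>
      rw [succ_succ, ih (b := b + 1) (by omega), ih (b := b) (by omega), succ_succ]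
      ring

end bernoulliConv

open Polynomial in
theorem sum_neg_one_pow_mul_choose_mul_choose (R : Type*) [CommRing R] (m j : ℕ) :
    ∑ k ∈ range (m + 1), (-1 : R) ^ k * m.choose k * k.choose j =
      if j = m then (-1) ^ m else 0 := by
  have h := congrArg (coeff · j) (add_pow (C (-1) * (X + 1) : R[X]) 1 m)
  rw [show C (-1) * (X + 1) + 1 = (C (-1) * X : R[X]) by simp] at h
  simp only [mul_pow, ← C_pow, one_pow, mul_one, finsetSum_coeff, coeff_C_mul, coeff_X_pow,
    mul_assoc, coeff_mul_natCast, coeff_X_add_one_pow, mul_ite, mul_zero] at h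
  rw [h]
  exact sum_congr rfl fun k _ => by ring

theorem sum_neg_one_pow_mul_choose_mul_bernoulliConv (w m c : ℕ) :
    ∑ k ∈ range (m + 1), (-1) ^ k * m.choose k * bernoulliConv w k c =
      if m ≤ c then (-1) ^ m * bernoulliWeighted w (c - m) else 0 := by
  have hswap : ∑ k ∈ range (m + 1), (-1) ^ k * m.choose k * bernoulliConv w k c =
      ∑ n ∈ range (c + 1), bernoulliWeighted w n * if c - n = m then (-1) ^ m else 0 := by
    simp only [bernoulliConv, mul_sum, ← sum_neg_one_pow_mul_choose_mul_choose ℚ m]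
    rw [sum_comm]
    exact sum_congr rfl fun _ _ => sum_congr rfl fun _ _ => by ring
  rw [hswap]
  split_ifs with hmc
  · rw [sum_eq_single_of_mem (c - m) (mem_range.mpr (by omega)) fun n hn hne => ?_]
    · rw [if_pos (by omega), mul_comm]
    · rw [if_neg (by grind), mul_zero]
  · exact sum_eq_zero fun n _ => by rw [if_neg (by omega), mul_zero]

theorem sum_range_two_mul_add_one_neg_one_pow_mul {R : Type*} [CommRing R] (f : ℕ → R)
    (m : ℕ) :
    ∑ k ∈ range (2 * m + 1), (-1) ^ k * f k =
      ∑ i ∈ range (m + 1), f (2 * i) - ∑ i ∈ range m, f (2 * i + 1) := by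
  induction m with
  | zero => simp
  | succ m ih =>
    rw [show 2 * (m + 1) + 1 = 2 * m + 1 + 1 + 1 by ring, sum_range_succ, sum_range_succ, ih]
    simp only [sum_range_succ, pow_succ, pow_mul, Nat.mul_succ]
    ring

theorem sum_mul_choose_add_choose_eq_neg_alternating {R : Type*} [CommRing R] (φ : ℕ → R)
    (b v : ℕ) (hφ_zero : φ 0 = 0) (hφ : ∀ i < v, φ (2 * (b + i) + 1) = -φ (2 * (v - i))) :
    ∑ ρ ∈ range (b + v), φ (2 * ρ + 1) *
        ((2 * v).choose (2 * ρ + 1) + (2 * v).choose (2 * (b + v) - 2 * ρ)) =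
      -∑ k ∈ range (2 * v + 1), (-1) ^ k * ((2 * v).choose k * φ k) := by
  have hodd : ∑ ρ ∈ range (b + v), φ (2 * ρ + 1) * (2 * v).choose (2 * ρ + 1) =
      ∑ i ∈ range v, (2 * v).choose (2 * i + 1) * φ (2 * i + 1) := by
    rw [← sum_subset (range_subset_range.mpr (Nat.le_add_left v b)) fun ρ _ hρ => ?_]
    · exact sum_congr rfl fun i _ => mul_comm _ _
    · rw [Nat.choose_eq_zero_of_lt (by grind), Nat.cast_zero, mul_zero]
  have heven : ∑ ρ ∈ range (b + v), φ (2 * ρ + 1) * (2 * v).choose (2 * (b + v) - 2 * ρ) =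
      -∑ i ∈ range (v + 1), (2 * v).choose (2 * i) * φ (2 * i) := by
    rw [sum_range_add, sum_eq_zero fun ρ hρ => ?_, zero_add, sum_range_succ', mul_zero, hφ_zero,
      mul_zero, add_zero, ← sum_range_reflect, ← sum_neg_distrib]
    · refine sum_congr rfl fun i hi => ?_
      have hi : i < v := mem_range.mp hi
      rw [hφ (v - 1 - i) (by omega), show v - (v - 1 - i) = i + 1 by omega,
        show 2 * (b + v) - 2 * (b + (v - 1 - i)) = 2 * (i + 1) by omega]
      ring
    · rw [Nat.choose_eq_zero_of_lt (by grind), Nat.cast_zero, mul_zero]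
  have hsplit := sum_congr rfl fun ρ (_ : ρ ∈ range (b + v)) => mul_add (φ (2 * ρ + 1))
    ((2 * v).choose (2 * ρ + 1) : R) ((2 * v).choose (2 * (b + v) - 2 * ρ))
  rw [hsplit, sum_add_distrib, hodd, heven, sum_range_two_mul_add_one_neg_one_pow_mul]
  ring

theorem sum_bernoulliConv_mul_choose_add_choose {a b u v : ℕ} (hu : 1 ≤ u)
    (h : a + u = b + v) :
    ∑ ρ ∈ range (a + u), bernoulliConv (2 * a) (2 * ρ + 1) (2 * u + 1) *
        ((2 * v).choose (2 * ρ + 1) + (2 * v).choose (2 * (a + u) - 2 * ρ)) =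
      if a = b then (2 * (a : ℚ) + 1) / 2 else 0 := by
  have hφ_zero : bernoulliConv (2 * a) 0 (2 * u + 1) = 0 := by
    rw [bernoulliConv.zero_left, bernoulliWeighted_two_mul_add_one, if_neg (by omega)]
  have hφ (i : ℕ) (hi : i < v) : bernoulliConv (2 * a) (2 * (b + i) + 1) (2 * u + 1) =
      -bernoulliConv (2 * a) (2 * (v - i)) (2 * u + 1) := by
    rw [bernoulliConv.eq_neg_one_pow_mul (b := 2 * (v - i)) (by omega), pow_succ, pow_mul]
    simp
  rw [h, sum_mul_choose_add_choose_eq_neg_alternating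
    (fun k ↦ bernoulliConv (2 * a) k (2 * u + 1)) b v hφ_zero hφ]
  simp only [← mul_assoc]
  rw [sum_neg_one_pow_mul_choose_mul_bernoulliConv]
  rcases lt_or_ge u v with huv | hvu
  · rw [if_neg (by omega), if_neg (by omega), neg_zero]
  rw [if_pos (by omega), show 2 * u + 1 - 2 * v = 2 * (u - v) + 1 by omega,
    bernoulliWeighted_two_mul_add_one, pow_mul, neg_one_sq, one_pow, one_mul]
  by_cases hab : a = b
  · rw [if_pos (by omega), if_pos hab, hab]
    push_cast
    ring
  · rw [if_neg (by omega), if_neg hab, neg_zero]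

theorem sum_choose_mul_choose_mul_bernoulli (a u x : ℕ) (hu : 1 ≤ u) :
    ∑ n ∈ range (2 * u + 1),
        (x.choose (2 * u - n + 1) : ℚ) * ((n + 2 * (a + 1) - 2).choose n : ℚ) * bernoulli n =
      bernoulliConv (2 * a) x (2 * u + 1) := by
  rw [bernoulliConv, sum_range_succ _ (2 * u + 1), bernoulliWeighted_two_mul_add_one,
    if_neg (by omega), zero_mul, add_zero]
  refine sum_congr rfl fun n hn => ?_
  have hn : n ≤ 2 * u := Nat.lt_succ_iff.mp (mem_range.mp hn)
  rw [bernoulliWeighted, show n + 2 * (a + 1) - 2 = n + 2 * a by omega,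
    show 2 * u - n + 1 = 2 * u + 1 - n by omega]
  ring

theorem zagier_conjecture_general (K : ℕ)
    (A P : Matrix (Fin (K - 1)) (Fin (K - 1)) ℚ)
    (hA : ∀ r s : Fin (K - 1),
      A r s = ((2 * K - 2 * ((s : ℕ) + 1)).choose (2 * ((r : ℕ) + 1) - 1) : ℚ) +
        ((2 * K - 2 * ((s : ℕ) + 1)).choose (2 * K - 2 * ((r : ℕ) + 1)) : ℚ))
    (hP : ∀ s r : Fin (K - 1),
      P s r = (2 / (2 * ((s : ℕ) + 1 : ℚ) - 1)) *
        ∑ n ∈ Finset.range (2 * K - 2 * ((s : ℕ) + 1) + 1),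
          ((2 * ((r : ℕ) + 1) - 1).choose (2 * K - 2 * ((s : ℕ) + 1) - n + 1) : ℚ) *
            ((n + 2 * ((s : ℕ) + 1) - 2).choose n : ℚ) * bernoulli n) :
    P * A = 1 := by
  ext s t
  obtain ⟨u, hu⟩ : ∃ u, K = s + u + 1 := ⟨K - 1 - s, by omega⟩
  obtain ⟨v, hv⟩ : ∃ v, K = t + v + 1 := ⟨K - 1 - t, by omega⟩
  have hentry (r : Fin (K - 1)) : P s r * A r t = 2 / (2 * s + 1) *
      (bernoulliConv (2 * s) (2 * r + 1) (2 * u + 1) *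
        ((2 * v).choose (2 * r + 1) + (2 * v).choose (2 * (s + u) - 2 * r))) := by
    rw [hP, hA, show 2 * K - 2 * ((s : ℕ) + 1) = 2 * u by omega,
      show 2 * K - 2 * ((t : ℕ) + 1) = 2 * v by omega,
      show 2 * K - 2 * ((r : ℕ) + 1) = 2 * (s + u) - 2 * r by omega,
      show 2 * ((r : ℕ) + 1) - 1 = 2 * r + 1 by omega,
      sum_choose_mul_choose_mul_bernoulli _ _ _ (by omega)]
    ring
  rw [Matrix.mul_apply, Matrix.one_apply, sum_congr rfl fun r _ => hentry r, ← mul_sum,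
    Fin.sum_univ_eq_sum_range (fun r => bernoulliConv (2 * s) (2 * r + 1) (2 * u + 1) *
        ((2 * v).choose (2 * r + 1) + (2 * v).choose (2 * (s + u) - 2 * r) : ℚ)),
    show range (K - 1) = range (s + u) by congr 1; omega,
    sum_bernoulliConv_mul_choose_add_choose (b := t) (by omega) (by omega)]
  by_cases hst : s = t
  · rw [if_pos hst, if_pos (congrArg Fin.val hst)]
    field_simp
  · rw [if_neg hst, if_neg (Fin.val_injective.ne hst), mul_zero]

theorem zagier_conjecture (K : ℕ) (hK : 2 ≤ K)
    (A P : Matrix (Fin (K - 1)) (Fin (K - 1)) ℚ)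
    (hA : ∀ r s : Fin (K - 1),
      A r s = ((2 * K - 2 * ((s : ℕ) + 1)).choose (2 * ((r : ℕ) + 1) - 1) : ℚ) +
        ((2 * K - 2 * ((s : ℕ) + 1)).choose (2 * K - 2 * ((r : ℕ) + 1)) : ℚ))
    (hP : ∀ s r : Fin (K - 1),
      P s r = (2 / (2 * ((s : ℕ) + 1 : ℚ) - 1)) *
        ∑ n ∈ Finset.range (2 * K - 2 * ((s : ℕ) + 1) + 1),
          ((2 * ((r : ℕ) + 1) - 1).choose (2 * K - 2 * ((s : ℕ) + 1) - n + 1) : ℚ) *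
            ((n + 2 * ((s : ℕ) + 1) - 2).choose n : ℚ) * bernoulli n) :
    P * A = 1 :=
  zagier_conjecture_general K A P hA hP
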